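/- Let Σ₁, …, Σ_n be symmetric positive definite d×d real matrices and λ₁, …, λ_n real weights with Σ_{k=1}^n λ_k = 1, with both I and J nonempty. Set μ₊ = Σ_{i∈I} λ_i⁺ and μ₋ = Σ_{j∈J} λ_j⁻, and assume μ₊ · min_{i∈I} √λ_min(Σ_i) > μ₋ · max_{j∈J} √λ_max(Σ_j). Then for every symmetric positive definite d×d matrix S, every i ∈ I and every j ∈ J, the matrix μ₊ · GM(S^{-1}, Σ_i) − μ₋ · GM(S^{-1}, Σ_j) is symmetric positive definite. -/

import Mathlib

/-!
Conjugating the Loewner bounds `λ_min(Σ) • 1 ≤ Σ ≤ λ_max(Σ) • 1` by `R = S^{1/2}` and taking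
square roots (which is operator monotone) gives `√λ_min(Σ) • R ≤ (R Σ R)^{1/2} ≤ √λ_max(Σ) • R`;
conjugating once more by `R⁻¹` sandwiches `GM(S⁻¹, Σ)` between `√λ_min(Σ) • S^{-1/2}` and
`√λ_max(Σ) • S^{-1/2}`. Hence `μ₊ GM(S⁻¹, Σᵢ) - μ₋ GM(S⁻¹, Σⱼ)` dominates
`(μ₊ √λ_min(Σᵢ) - μ₋ √λ_max(Σⱼ)) • S^{-1/2}`, a positive multiple of a positive definite matrix.
-/

open Matrix BigOperators Finset
open scoped Classical

/-- Unique positive semidefinite square root of a positive semidefinite matrix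
(and junk value `0` on other matrices). -/
noncomputable def msqrt {d : ℕ} (M : Matrix (Fin d) (Fin d) ℝ) :
    Matrix (Fin d) (Fin d) ℝ :=
  if h : M.PosSemidef then
    h.1.eigenvectorUnitary.1 * diagonal ((↑) ∘ (√·) ∘ h.1.eigenvalues) *
      (star h.1.eigenvectorUnitary : Matrix (Fin d) (Fin d) ℝ)
  else 0

/-- Smallest eigenvalue of a symmetric matrix (junk value `0` otherwise). -/
noncomputable def lmin {d : ℕ} (M : Matrix (Fin d) (Fin d) ℝ) : ℝ :=
  if h : M.IsHermitian then ⨅ i, h.eigenvalues i else 0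

/-- Largest eigenvalue of a symmetric matrix (junk value `0` otherwise). -/
noncomputable def lmax {d : ℕ} (M : Matrix (Fin d) (Fin d) ℝ) : ℝ :=
  if h : M.IsHermitian then ⨆ i, h.eigenvalues i else 0

/-- Squared Bures–Wasserstein distance. -/
noncomputable def W2sq {d : ℕ} (A B : Matrix (Fin d) (Fin d) ℝ) : ℝ :=
  A.trace + B.trace - 2 * (msqrt (msqrt A * B * msqrt A)).trace

/-- The conditional barycenter objective `F`. -/
noncomputable def Fobj {d n : ℕ} (Sig : Fin n → Matrix (Fin d) (Fin d) ℝ)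
    (lam : Fin n → ℝ) (S : Matrix (Fin d) (Fin d) ℝ) : ℝ :=
  ∑ k, lam k * W2sq S (Sig k)

/-- Geometric mean `GM(S⁻¹, Σ) = S^{-1/2} (S^{1/2} Σ S^{1/2})^{1/2} S^{-1/2}`. -/
noncomputable def GMinv {d : ℕ} (S Sigma : Matrix (Fin d) (Fin d) ℝ) :
    Matrix (Fin d) (Fin d) ℝ :=
  (msqrt S)⁻¹ * msqrt (msqrt S * Sigma * msqrt S) * (msqrt S)⁻¹

/-- The Spectral Dominance of Positive Weights condition. -/
def SDPW {d n : ℕ} (Sig : Fin n → Matrix (Fin d) (Fin d) ℝ) (lam : Fin n → ℝ) : Prop :=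
  ∑ j ∈ Finset.univ.filter (fun k => lam k < 0), (-lam j) * Real.sqrt (lmax (Sig j))
    < ∑ i ∈ Finset.univ.filter (fun k => 0 < lam k), lam i * Real.sqrt (lmin (Sig i))


open scoped MatrixOrder ComplexOrder

namespace Matrix

lemma PosDef.of_le {n 𝕜 : Type*} [Fintype n] [RCLike 𝕜] {A B : Matrix n n 𝕜}
    (hA : A.PosDef) (h : A ≤ B) : B.PosDef := by
  simpa using hA.add_posSemidef (le_iff.mp h)

variable {n : Type*} [Fintype n] [DecidableEq n]

lemma sqrt_smul {c : ℝ} (hc : 0 ≤ c) {A : Matrix n n ℝ} (hA : 0 ≤ A) :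
    CFC.sqrt (c • A) = √c • CFC.sqrt A := by
  refine CFC.sqrt_unique ?_ (smul_nonneg (Real.sqrt_nonneg c) (CFC.sqrt_nonneg A))
  rw [smul_mul_smul, CFC.sqrt_mul_sqrt_self A, Real.mul_self_sqrt hc]

/- If `v` is an eigenvector of `X - Y` for an eigenvalue `t < 0`, then, as
`X * X - Y * Y = X * (X - Y) + (X - Y) * Y`, we get `0 ≤ vᵀ (X² - Y²) v = t (vᵀ X v + vᵀ Y v) ≤ 0`,
which forces `X v = Y v = 0` and hence `t v = 0`. -/
lemma le_of_mul_self_le_mul_self {X Y : Matrix n n ℝ} (hX : 0 ≤ X) (hY : 0 ≤ Y)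
    (h : Y * Y ≤ X * X) : Y ≤ X := by
  rw [nonneg_iff_posSemidef] at hX hY
  have hD : (X - Y).IsHermitian := hX.1.sub hY.1
  rw [le_iff, hD.posSemidef_iff_eigenvalues_nonneg]
  intro i
  by_contra! ht
  rw [Pi.zero_apply] at ht
  set t := hD.eigenvalues i
  set v : n → ℝ := ⇑(hD.eigenvectorBasis i)
  have hv : (X - Y) *ᵥ v = t • v := hD.mulVec_eigenvectorBasis i
  have hv0 : v ≠ 0 := fun h0 => hD.eigenvectorBasis.orthonormal.ne_zero i (by ext; simp [v, h0])
  have hquad : v ⬝ᵥ (X * X - Y * Y) *ᵥ v = t * (v ⬝ᵥ X *ᵥ v + v ⬝ᵥ Y *ᵥ v) := by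
    have hsplit : X * X - Y * Y = X * (X - Y) + (X - Y) * Y := by noncomm_ring
    have hvecMul : vecMul v (X - Y) = t • v := by
      rw [← mulVec_transpose, ← conjTranspose_eq_transpose_of_trivial, hD.eq, hv]
    rw [hsplit, add_mulVec, dotProduct_add, ← mulVec_mulVec, ← mulVec_mulVec, hv, mulVec_smul,
      dotProduct_mulVec v (X - Y), hvecMul]
    simp only [dotProduct_smul, smul_dotProduct, smul_eq_mul]
    ring
  have hXv : 0 ≤ v ⬝ᵥ X *ᵥ v := by simpa using hX.dotProduct_mulVec_nonneg v
  have hYv : 0 ≤ v ⬝ᵥ Y *ᵥ v := by simpa using hY.dotProduct_mulVec_nonneg v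
  have hdiff : 0 ≤ v ⬝ᵥ (X * X - Y * Y) *ᵥ v := by
    simpa using (le_iff.mp h).dotProduct_mulVec_nonneg v
  have hsum : v ⬝ᵥ X *ᵥ v + v ⬝ᵥ Y *ᵥ v = 0 := by nlinarith
  have hX0 : X *ᵥ v = 0 :=
    (hX.dotProduct_mulVec_zero_iff v).mp (by simpa using (by linarith : v ⬝ᵥ X *ᵥ v = 0))
  have hY0 : Y *ᵥ v = 0 :=
    (hY.dotProduct_mulVec_zero_iff v).mp (by simpa using (by linarith : v ⬝ᵥ Y *ᵥ v = 0))
  have htv : t • v = 0 := by rw [← hv, sub_mulVec, hX0, hY0, sub_zero]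
  exact hv0 ((smul_eq_zero.mp htv).resolve_left ht.ne)

/- `CFC.monotone_sqrt` is stated for C⋆-algebras, a structure real matrices do not carry. -/
lemma monotone_sqrt : Monotone (CFC.sqrt : Matrix n n ℝ → Matrix n n ℝ) := by
  intro A B hAB
  by_cases hA : 0 ≤ A
  · refine le_of_mul_self_le_mul_self (CFC.sqrt_nonneg B) (CFC.sqrt_nonneg A) ?_
    rwa [CFC.sqrt_mul_sqrt_self A, CFC.sqrt_mul_sqrt_self B (hA.trans hAB)]
  · rw [CFC.sqrt_of_not_nonneg hA]
    exact CFC.sqrt_nonneg B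

lemma smul_le_sqrt_conj {c : ℝ} (hc : 0 ≤ c) {R A : Matrix n n ℝ} (hR : 0 ≤ R)
    (h : c • 1 ≤ A) : √c • R ≤ CFC.sqrt (R * A * R) := by
  have hconj : c • (R * R) ≤ R * A * R := by
    simpa using conjugate_le_conjugate_of_nonneg h hR
  calc √c • R = CFC.sqrt (c • (R * R)) := by
        rw [sqrt_smul hc (IsSelfAdjoint.of_nonneg hR).mul_self_nonneg, CFC.sqrt_mul_self R]
    _ ≤ CFC.sqrt (R * A * R) := monotone_sqrt hconj

lemma sqrt_conj_le_smul {c : ℝ} (hc : 0 ≤ c) {R A : Matrix n n ℝ} (hR : 0 ≤ R)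
    (h : A ≤ c • 1) : CFC.sqrt (R * A * R) ≤ √c • R := by
  have hconj : R * A * R ≤ c • (R * R) := by
    simpa using conjugate_le_conjugate_of_nonneg h hR
  calc CFC.sqrt (R * A * R) ≤ CFC.sqrt (c • (R * R)) := monotone_sqrt hconj
    _ = √c • R := by
        rw [sqrt_smul hc (IsSelfAdjoint.of_nonneg hR).mul_self_nonneg, CFC.sqrt_mul_self R]

end Matrix

section

variable {d : ℕ}

/- Off the positive semidefinite cone both sides are the junk value `0`. -/
lemma msqrt_eq_sqrt (M : Matrix (Fin d) (Fin d) ℝ) : msqrt M = CFC.sqrt M := by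
  by_cases hM : M.PosSemidef
  · rw [msqrt, dif_pos hM, CFC.sqrt_eq_cfc, cfc_nnreal_eq_real _ M, hM.1.cfc_eq]
    simp only [IsHermitian.cfc, Unitary.conjStarAlgAut_apply, Real.coe_sqrt, Real.coe_toNNReal']
    congr 3
    funext k
    simp [max_eq_left (hM.eigenvalues_nonneg k)]
  · rw [msqrt, dif_neg hM, CFC.sqrt_of_not_nonneg (by rwa [Matrix.nonneg_iff_posSemidef])]

lemma Matrix.PosDef.isUnit_det_msqrt {S : Matrix (Fin d) (Fin d) ℝ} (hS : S.PosDef) :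
    IsUnit (msqrt S).det := by
  rw [msqrt_eq_sqrt, ← Matrix.isUnit_iff_isUnit_det]
  exact hS.isStrictlyPositive.sqrt.isUnit

lemma lmin_smul_one_le {A : Matrix (Fin d) (Fin d) ℝ} (hA : A.IsHermitian) : lmin A • 1 ≤ A := by
  rw [← Algebra.algebraMap_eq_smul_one]
  refine algebraMap_le_of_le_spectrum (fun x hx => ?_) hA.isSelfAdjoint
  obtain ⟨i, rfl⟩ := hA.spectrum_real_eq_range_eigenvalues ▸ hx
  rw [lmin, dif_pos hA]
  exact ciInf_le (Set.finite_range _).bddBelow i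

lemma le_lmax_smul_one {A : Matrix (Fin d) (Fin d) ℝ} (hA : A.IsHermitian) : A ≤ lmax A • 1 := by
  rw [← Algebra.algebraMap_eq_smul_one]
  refine le_algebraMap_of_spectrum_le (fun x hx => ?_) hA.isSelfAdjoint
  obtain ⟨i, rfl⟩ := hA.spectrum_real_eq_range_eigenvalues ▸ hx
  rw [lmax, dif_pos hA]
  exact le_ciSup (Set.finite_range _).bddAbove i

lemma lmin_nonneg {A : Matrix (Fin d) (Fin d) ℝ} (hA : A.PosSemidef) : 0 ≤ lmin A := by
  rw [lmin, dif_pos hA.1]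
  exact Real.iInf_nonneg hA.eigenvalues_nonneg

lemma lmax_nonneg {A : Matrix (Fin d) (Fin d) ℝ} (hA : A.PosSemidef) : 0 ≤ lmax A := by
  rw [lmax, dif_pos hA.1]
  exact Real.iSup_nonneg hA.eigenvalues_nonneg

lemma smul_inv_msqrt_le_GMinv {S Sigma : Matrix (Fin d) (Fin d) ℝ} (hS : S.PosDef)
    (hSigma : Sigma.PosSemidef) : √(lmin Sigma) • (msqrt S)⁻¹ ≤ GMinv S Sigma := by
  have hu := hS.isUnit_det_msqrt
  rw [msqrt_eq_sqrt] at hu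
  simp only [GMinv, msqrt_eq_sqrt]
  calc √(lmin Sigma) • (CFC.sqrt S)⁻¹
      = (CFC.sqrt S)⁻¹ * (√(lmin Sigma) • CFC.sqrt S) * (CFC.sqrt S)⁻¹ := by
        rw [Matrix.mul_smul, Matrix.smul_mul, Matrix.nonsing_inv_mul _ hu, one_mul]
    _ ≤ _ := conjugate_le_conjugate_of_nonneg
        (Matrix.smul_le_sqrt_conj (lmin_nonneg hSigma) (CFC.sqrt_nonneg S)
          (lmin_smul_one_le hSigma.1))
        (CFC.sqrt_nonneg S).posSemidef.inv.nonneg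

lemma GMinv_le_smul_inv_msqrt {S Sigma : Matrix (Fin d) (Fin d) ℝ} (hS : S.PosDef)
    (hSigma : Sigma.PosSemidef) : GMinv S Sigma ≤ √(lmax Sigma) • (msqrt S)⁻¹ := by
  have hu := hS.isUnit_det_msqrt
  rw [msqrt_eq_sqrt] at hu
  simp only [GMinv, msqrt_eq_sqrt]
  calc _ ≤ (CFC.sqrt S)⁻¹ * (√(lmax Sigma) • CFC.sqrt S) * (CFC.sqrt S)⁻¹ :=
        conjugate_le_conjugate_of_nonneg
          (Matrix.sqrt_conj_le_smul (lmax_nonneg hSigma) (CFC.sqrt_nonneg S)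
            (le_lmax_smul_one hSigma.1))
          (CFC.sqrt_nonneg S).posSemidef.inv.nonneg
    _ = √(lmax Sigma) • (CFC.sqrt S)⁻¹ := by
        rw [Matrix.mul_smul, Matrix.smul_mul, Matrix.nonsing_inv_mul _ hu, one_mul]

end

theorem stmt12_general {d n : ℕ} (Sig : Fin n → Matrix (Fin d) (Fin d) ℝ)
    (lam : Fin n → ℝ) (hSig : ∀ k, (Sig k).PosDef)
    (hI : (Finset.univ.filter (fun k => 0 < lam k)).Nonempty)
    (hJ : (Finset.univ.filter (fun k => lam k < 0)).Nonempty)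
    (μp μm : ℝ)
    (hμp : μp = ∑ i ∈ Finset.univ.filter (fun k => 0 < lam k), lam i)
    (hμm : μm = ∑ j ∈ Finset.univ.filter (fun k => lam k < 0), -lam j)
    (hcond : μm * ((Finset.univ.filter (fun k => lam k < 0)).sup' hJ fun j => Real.sqrt (lmax (Sig j)))
      < μp * ((Finset.univ.filter (fun k => 0 < lam k)).inf' hI fun i => Real.sqrt (lmin (Sig i)))) :
    ∀ S : Matrix (Fin d) (Fin d) ℝ, S.PosDef →
      ∀ i ∈ Finset.univ.filter (fun k => 0 < lam k), ∀ j ∈ Finset.univ.filter (fun k => lam k < 0),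
        (μp • GMinv S (Sig i) - μm • GMinv S (Sig j)).PosDef := by
  intro S hS i hi j hj
  have hμp0 : 0 ≤ μp := hμp ▸ sum_nonneg fun k hk => (mem_filter.mp hk).2.le
  have hμm0 : 0 ≤ μm := hμm ▸ sum_nonneg fun k hk => neg_nonneg.mpr (mem_filter.mp hk).2.le
  have hgap : μm * √(lmax (Sig j)) < μp * √(lmin (Sig i)) :=
    calc μm * √(lmax (Sig j))
        ≤ μm * _ := mul_le_mul_of_nonneg_left (le_sup' (fun k => √(lmax (Sig k))) hj) hμm0
      _ < μp * _ := hcond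
      _ ≤ μp * √(lmin (Sig i)) :=
        mul_le_mul_of_nonneg_left (inf'_le (fun k => √(lmin (Sig k))) hi) hμp0
  have hbound : (μp * √(lmin (Sig i)) - μm * √(lmax (Sig j))) • (msqrt S)⁻¹
      ≤ μp • GMinv S (Sig i) - μm • GMinv S (Sig j) := by
    rw [sub_smul, mul_smul, mul_smul]
    exact sub_le_sub
      (smul_le_smul_of_nonneg_left (smul_inv_msqrt_le_GMinv hS (hSig i).posSemidef) hμp0)
      (smul_le_smul_of_nonneg_left (GMinv_le_smul_inv_msqrt hS (hSig j).posSemidef) hμm0)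
  have hT : ((msqrt S)⁻¹).PosDef := by
    rw [msqrt_eq_sqrt]
    exact hS.isStrictlyPositive.sqrt.posDef.inv
  exact (hT.smul (sub_pos.mpr hgap)).of_le hbound

/-- under the pairwise (stricter) spectral dominance condition, each
pairwise stochastic combination `μ₊ GM(S⁻¹, Σᵢ) − μ₋ GM(S⁻¹, Σⱼ)` is positive definite. -/
theorem stmt12 {d n : ℕ} (Sig : Fin n → Matrix (Fin d) (Fin d) ℝ)
    (lam : Fin n → ℝ) (hSig : ∀ k, (Sig k).PosDef) (hsum : ∑ k, lam k = 1)
    (hI : (Finset.univ.filter (fun k => 0 < lam k)).Nonempty)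
    (hJ : (Finset.univ.filter (fun k => lam k < 0)).Nonempty)
    (μp μm : ℝ)
    (hμp : μp = ∑ i ∈ Finset.univ.filter (fun k => 0 < lam k), lam i)
    (hμm : μm = ∑ j ∈ Finset.univ.filter (fun k => lam k < 0), -lam j)
    (hcond : μm * ((Finset.univ.filter (fun k => lam k < 0)).sup' hJ fun j => Real.sqrt (lmax (Sig j)))
      < μp * ((Finset.univ.filter (fun k => 0 < lam k)).inf' hI fun i => Real.sqrt (lmin (Sig i)))) :
    ∀ S : Matrix (Fin d) (Fin d) ℝ, S.PosDef →
      ∀ i ∈ Finset.univ.filter (fun k => 0 < lam k), ∀ j ∈ Finset.univ.filter (fun k => lam k < 0),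
        (μp • GMinv S (Sig i) - μm • GMinv S (Sig j)).PosDef :=
  stmt12_general Sig lam hSig hI hJ μp μm hμp hμm hcond
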